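/- For positive integers m and odd n, the treewidth of K_m □ K_n is at least m(n+1)/2 − 1. -/

import Mathlib

open SimpleGraph

/-- A tree decomposition of a simple graph `G`. -/
structure TreeDecomposition {V : Type*} (G : SimpleGraph V) where
  /-- index type of the decomposition tree -/
  ι : Type
  /-- the decomposition tree -/
  T : SimpleGraph ι
  isTree : T.IsTree
  /-- the bags of the decomposition -/
  bag : ι → Set V
  bag_finite : ∀ i, (bag i).Finite
  vert_cover : ∀ v : V, ∃ i, v ∈ bag i
  edge_cover : ∀ u v : V, G.Adj u v → ∃ i, u ∈ bag i ∧ v ∈ bag i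
  coherent : ∀ v : V, (T.induce {i | v ∈ bag i}).Connected

/-- The width of a tree decomposition: the maximal bag size minus one. -/
def TreeDecomposition.HasWidthAtMost {V : Type*} {G : SimpleGraph V}
    (d : TreeDecomposition G) (w : ℕ) : Prop :=
  ∀ i, (d.bag i).ncard ≤ w + 1

/-- The treewidth of a simple graph. -/
noncomputable def treewidth {V : Type*} (G : SimpleGraph V) : ℕ :=
  sInf {w | ∃ d : TreeDecomposition G, d.HasWidthAtMost w}

/-- A minor model (vertex model) of `G` inside `H`. -/
structure MinorMap {α β : Type*} (G : SimpleGraph α) (H : SimpleGraph β) where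
  /-- the chain (branch set) assigned to each vertex -/
  chain : α → Set β
  chain_nonempty : ∀ v, (chain v).Nonempty
  chain_connected : ∀ v, (H.induce (chain v)).Connected
  chain_disjoint : ∀ u v, u ≠ v → Disjoint (chain u) (chain v)
  chain_edge : ∀ u v, G.Adj u v → ∃ a ∈ chain u, ∃ b ∈ chain v, H.Adj a b

/-- `G` is a minor of `H`. -/
def IsMinorOf {α β : Type*} (G : SimpleGraph α) (H : SimpleGraph β) : Prop :=
  Nonempty (MinorMap G H)

/-- The Chimera graph `C_{N,M,L}`: an `N × M` grid of `K_{L,L}` bipartite blocks.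
A vertex is `((i, j), (side, k))` where `(i,j)` locates the block, `side = false`
for the left (vertical) side, `side = true` for the right (horizontal) side, and
`k` indexes the vertex within its side. -/
def chimera (N M L : ℕ) : SimpleGraph ((Fin N × Fin M) × Bool × Fin L) :=
  SimpleGraph.fromRel (fun a b =>
    -- intra-block edges of K_{L,L}
    (a.1 = b.1 ∧ a.2.1 = false ∧ b.2.1 = true) ∨
    -- vertical inter-block edges between left-side vertices
    (a.2.1 = false ∧ b.2.1 = false ∧ a.2.2 = b.2.2 ∧
      a.1.2 = b.1.2 ∧ (a.1.1 : ℕ) + 1 = b.1.1) ∨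
    -- horizontal inter-block edges between right-side vertices
    (a.2.1 = true ∧ b.2.1 = true ∧ a.2.2 = b.2.2 ∧
      a.1.1 = b.1.1 ∧ (a.1.2 : ℕ) + 1 = b.1.2))


/-!
For a row `r` and a set `C` of `(n + 1) / 2` columns, the cells `{r} × C` form a clique, and any two
such cliques touch, because two `(n + 1) / 2`-subsets of the `n` columns share a column. In a tree
decomposition, the nodes whose bags meet a clique form a subtree; these subtrees pairwise intersect,
so by the Helly property of subtrees a single bag meets every such clique. That bag then misses
fewer than `(n + 1) / 2` cells of each row, so it has at least `m (n + 1) / 2` vertices.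
-/

namespace SimpleGraph

variable {V : Type*} {G : SimpleGraph V}

def IsWalkConnected (G : SimpleGraph V) (S : Set V) : Prop :=
  ∀ a ∈ S, ∀ b ∈ S, ∃ p : G.Walk a b, ∀ y ∈ p.support, y ∈ S

def Touch (G : SimpleGraph V) (A B : Set V) : Prop :=
  ∃ u ∈ A, ∃ v ∈ B, u = v ∨ G.Adj u v

lemma isWalkConnected_of_connected_induce {S : Set V} (h : (G.induce S).Connected) :
    G.IsWalkConnected S := by
  intro a ha b hb
  obtain ⟨p⟩ := h.preconnected ⟨a, ha⟩ ⟨b, hb⟩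
  refine ⟨p.map (Embedding.induce S).toHom, fun y hy => ?_⟩
  replace hy : y ∈ (p.map (Embedding.induce S).toHom).support := hy
  rw [Walk.support_map, List.mem_map] at hy
  obtain ⟨z, -, rfl⟩ := hy
  exact z.prop

lemma isWalkConnected_univ (hG : G.Preconnected) : G.IsWalkConnected Set.univ :=
  fun a _ b _ => ⟨(hG a b).some, fun _ _ => trivial⟩

lemma Walk.exists_append_eq_of_mem {a b : V} (p : G.Walk a b) {B : Set V} (hb : b ∈ B) :
    ∃ x ∈ B, ∃ (q : G.Walk a x) (r : G.Walk x b), q.append r = p ∧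
      ∀ y ∈ q.support, y ∈ B → y = x := by
  induction p with
  | nil => exact ⟨_, hb, Walk.nil, Walk.nil, rfl, fun y hy _ => by simpa using hy⟩
  | @cons u v w huv p ih =>
    by_cases hu : u ∈ B
    · exact ⟨u, hu, Walk.nil, Walk.cons huv p, rfl, fun y hy _ => by simpa using hy⟩
    obtain ⟨x, hxB, q, r, hqr, hq⟩ := ih hb
    refine ⟨x, hxB, Walk.cons huv q, r, by rw [Walk.cons_append, hqr], fun y hy hyB => ?_⟩
    rcases List.mem_cons.mp (Walk.support_cons huv q ▸ hy) with rfl | hy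
    · exact absurd hyB hu
    · exact hq y hy hyB

lemma Walk.IsPath.append_of_support_inter {a x c : V} {q : G.Walk a x} {r : G.Walk x c}
    (hq : q.IsPath) (hr : r.IsPath) (h : ∀ y ∈ q.support, y ∈ r.support → y = x) :
    (q.append r).IsPath := by
  rw [Walk.isPath_def, Walk.support_append]
  have hnd : (x :: r.support.tail).Nodup := r.cons_tail_support ▸ hr.support_nodup
  refine hq.support_nodup.append (List.nodup_cons.mp hnd).2 fun y hyq hyr => ?_
  obtain rfl := h y hyq (r.cons_tail_support ▸ List.mem_cons_of_mem _ hyr)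
  exact (List.nodup_cons.mp hnd).1 hyr

variable {T : SimpleGraph V}

lemma IsTree.support_subset_of_isPath (hT : T.IsTree) {S : Set V} (hS : T.IsWalkConnected S)
    {a b : V} (ha : a ∈ S) (hb : b ∈ S) {p : T.Walk a b} (hp : p.IsPath) :
    ∀ y ∈ p.support, y ∈ S := by
  classical
  obtain ⟨q, hq⟩ := hS a ha b hb
  have hqp : q.bypass = p := (hT.existsUnique_path a b).unique q.bypass_isPath hp
  exact fun y hy => hq y (q.support_bypass_subset_support (hqp ▸ hy))

lemma IsTree.isWalkConnected_inter (hT : T.IsTree) {S S' : Set V} (hS : T.IsWalkConnected S)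
    (hS' : T.IsWalkConnected S') : T.IsWalkConnected (S ∩ S') := by
  intro a ha b hb
  obtain ⟨p, hp, -⟩ := hT.existsUnique_path a b
  exact ⟨p, fun y hy => ⟨hT.support_subset_of_isPath hS ha.1 hb.1 hp y hy,
    hT.support_subset_of_isPath hS' ha.2 hb.2 hp y hy⟩⟩

/-- The median of `a`, `b`, `c`: the path from `a` to `b` leaves it at its first vertex `x` on the
path from `b` to `c`, and `x` splits the path from `a` to `c`. -/
lemma IsTree.exists_mem_support_of_isPath [DecidableEq V] (hT : T.IsTree) {a b c : V}
    {p : T.Walk a b} {q : T.Walk b c} {r : T.Walk a c}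
    (hp : p.IsPath) (hq : q.IsPath) (hr : r.IsPath) :
    ∃ x ∈ p.support, x ∈ q.support ∧ x ∈ r.support := by
  obtain ⟨x, hxq, p₁, p₂, rfl, hp₁⟩ :=
    p.exists_append_eq_of_mem (B := {y | y ∈ q.support}) q.start_mem_support
  have hx : x ∈ p₁.support := p₁.end_mem_support
  have hpath : (p₁.append (q.dropUntil x hxq)).IsPath :=
    hp.of_append_left.append_of_support_inter (hq.dropUntil hxq)
      fun y hy hyq => hp₁ y hy (q.support_dropUntil_subset_support hxq hyq)
  obtain rfl := (hT.existsUnique_path a c).unique hpath hr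
  exact ⟨x, Walk.mem_support_append_iff _ _ |>.mpr (Or.inl hx), hxq,
    Walk.mem_support_append_iff _ _ |>.mpr (Or.inl hx)⟩

lemma IsTree.inter_inter_nonempty (hT : T.IsTree) {S₁ S₂ S₃ : Set V}
    (h₁ : T.IsWalkConnected S₁) (h₂ : T.IsWalkConnected S₂) (h₃ : T.IsWalkConnected S₃)
    (h₁₂ : (S₁ ∩ S₂).Nonempty) (h₁₃ : (S₁ ∩ S₃).Nonempty) (h₂₃ : (S₂ ∩ S₃).Nonempty) :
    (S₁ ∩ S₂ ∩ S₃).Nonempty := by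
  classical
  obtain ⟨a, ha₁, ha₂⟩ := h₁₂
  obtain ⟨b, hb₁, hb₃⟩ := h₁₃
  obtain ⟨c, hc₂, hc₃⟩ := h₂₃
  obtain ⟨p, hp, -⟩ := hT.existsUnique_path a b
  obtain ⟨q, hq, -⟩ := hT.existsUnique_path b c
  obtain ⟨r, hr, -⟩ := hT.existsUnique_path a c
  obtain ⟨x, hxp, hxq, hxr⟩ := hT.exists_mem_support_of_isPath hp hq hr
  exact ⟨x, ⟨hT.support_subset_of_isPath h₁ ha₁ hb₁ hp x hxp,
    hT.support_subset_of_isPath h₂ ha₂ hc₂ hr x hxr⟩,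
    hT.support_subset_of_isPath h₃ hb₃ hc₃ hq x hxq⟩

lemma IsTree.inter_sInter_nonempty (hT : T.IsTree) {S₀ : Set V} (h₀ : T.IsWalkConnected S₀)
    (hne : S₀.Nonempty) {𝓢 : Set (Set V)} (hfin : 𝓢.Finite)
    (hconn : ∀ S ∈ 𝓢, T.IsWalkConnected S) (hpair : ∀ S ∈ 𝓢, ∀ S' ∈ 𝓢, (S ∩ S').Nonempty)
    (hmeet : ∀ S ∈ 𝓢, (S₀ ∩ S).Nonempty) : (S₀ ∩ ⋂₀ 𝓢).Nonempty := by
  induction 𝓢, hfin using Set.Finite.induction_on generalizing S₀ with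
  | empty => simpa using hne
  | @insert R 𝓢 _ _ ih =>
    have hR := hconn R (Set.mem_insert _ _)
    have hconn' S (hS : S ∈ 𝓢) := hconn S (Set.mem_insert_of_mem _ hS)
    have hpair' S (hS : S ∈ 𝓢) S' (hS' : S' ∈ 𝓢) :=
      hpair S (Set.mem_insert_of_mem _ hS) S' (Set.mem_insert_of_mem _ hS')
    obtain ⟨x, ⟨hx₀, hxR⟩, hx⟩ := ih (hT.isWalkConnected_inter h₀ hR)
      (hmeet R (Set.mem_insert _ _)) hconn' hpair' fun S hS =>
        hT.inter_inter_nonempty h₀ hR (hconn' S hS) (hmeet R (Set.mem_insert _ _))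
          (hmeet S (Set.mem_insert_of_mem _ hS))
          (hpair R (Set.mem_insert _ _) S (Set.mem_insert_of_mem _ hS))
    exact ⟨x, hx₀, Set.sInter_insert R 𝓢 ▸ ⟨hxR, hx⟩⟩

/-- Helly property of subtrees. -/
lemma IsTree.sInter_nonempty (hT : T.IsTree) {𝓢 : Set (Set V)} (hfin : 𝓢.Finite)
    (hconn : ∀ S ∈ 𝓢, T.IsWalkConnected S) (hpair : ∀ S ∈ 𝓢, ∀ S' ∈ 𝓢, (S ∩ S').Nonempty) :
    (⋂₀ 𝓢).Nonempty := by
  have := hT.connected.nonempty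
  simpa using hT.inter_sInter_nonempty (isWalkConnected_univ hT.connected.preconnected)
    Set.univ_nonempty hfin hconn hpair fun S hS => by simpa using hpair S hS S hS

end SimpleGraph

namespace TreeDecomposition

variable {V : Type*} {G : SimpleGraph V}

def singleBag (G : SimpleGraph V) [Finite V] : TreeDecomposition G where
  ι := Unit
  T := ⊥
  isTree := .of_subsingleton
  bag _ := Set.univ
  bag_finite _ := Set.finite_univ
  vert_cover v := ⟨(), Set.mem_univ v⟩
  edge_cover u v _ := ⟨(), Set.mem_univ u, Set.mem_univ v⟩
  coherent _ := (connected_iff _).mpr ⟨.of_subsingleton, ⟨⟨(), trivial⟩⟩⟩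

def nodesMeeting (d : TreeDecomposition G) (E : Set V) : Set d.ι :=
  {i | (E ∩ d.bag i).Nonempty}

lemma isWalkConnected_nodesMeeting (d : TreeDecomposition G) {E : Set V} (hE : G.IsClique E) :
    d.T.IsWalkConnected (d.nodesMeeting E) := by
  rintro i ⟨u, huE, hu⟩ j ⟨v, hvE, hv⟩
  have hconn (w : V) := isWalkConnected_of_connected_induce (d.coherent w)
  obtain ⟨κ, hκu, hκv⟩ : ∃ κ, u ∈ d.bag κ ∧ v ∈ d.bag κ := by
    by_cases huv : u = v
    · exact ⟨i, hu, huv ▸ hu⟩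
    · exact d.edge_cover u v (hE huE hvE huv)
  obtain ⟨p, hp⟩ := hconn u i hu κ hκu
  obtain ⟨q, hq⟩ := hconn v κ hκv j hv
  refine ⟨p.append q, fun y hy => ?_⟩
  rcases (Walk.mem_support_append_iff _ _).mp hy with hy | hy
  · exact ⟨u, huE, hp y hy⟩
  · exact ⟨v, hvE, hq y hy⟩

lemma nodesMeeting_inter_nonempty (d : TreeDecomposition G) {E F : Set V} (h : G.Touch E F) :
    (d.nodesMeeting E ∩ d.nodesMeeting F).Nonempty := by
  obtain ⟨u, huE, v, hvF, rfl | huv⟩ := h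
  · obtain ⟨i, hi⟩ := d.vert_cover u
    exact ⟨i, ⟨u, huE, hi⟩, ⟨u, hvF, hi⟩⟩
  · obtain ⟨i, hui, hvi⟩ := d.edge_cover u v huv
    exact ⟨i, ⟨u, huE, hui⟩, ⟨v, hvF, hvi⟩⟩

/-- A finite bramble of cliques is hit by a single bag: the nodes whose bags meet a clique form a
subtree, and these subtrees pairwise intersect, so the Helly property applies. -/
lemma exists_bag_meets_of_pairwise_touch (d : TreeDecomposition G) {𝓑 : Set (Set V)}
    (hfin : 𝓑.Finite) (hcl : ∀ E ∈ 𝓑, G.IsClique E) (htouch : ∀ E ∈ 𝓑, ∀ F ∈ 𝓑, G.Touch E F) :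
    ∃ i, ∀ E ∈ 𝓑, (E ∩ d.bag i).Nonempty := by
  obtain ⟨i, hi⟩ := d.isTree.sInter_nonempty (hfin.image d.nodesMeeting)
    (Set.forall_mem_image.mpr fun E hE => d.isWalkConnected_nodesMeeting (hcl E hE))
    (Set.forall_mem_image.mpr fun E hE => Set.forall_mem_image.mpr fun F hF =>
      d.nodesMeeting_inter_nonempty (htouch E hE F hF))
  exact ⟨i, fun E hE => hi _ (Set.mem_image_of_mem _ hE)⟩

end TreeDecomposition

lemma le_treewidth_of_forall_exists_le_ncard_bag {V : Type*} [Finite V] {G : SimpleGraph V}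
    {k : ℕ} (h : ∀ d : TreeDecomposition G, ∃ i, k ≤ (d.bag i).ncard) :
    k - 1 ≤ treewidth G := by
  refine le_csInf ⟨Nat.card V, TreeDecomposition.singleBag G, fun _ => ?_⟩ ?_
  · simp [TreeDecomposition.singleBag, Set.ncard_univ]
  · rintro w ⟨d, hd⟩
    obtain ⟨i, hi⟩ := h d
    have := hd i
    omega

section

open Finset

variable {α β : Type*}

lemma Finset.card_lt_card_add_of_forall_inter_nonempty [Fintype β] [DecidableEq β]
    {A : Finset β} {K : ℕ} (h : ∀ C : Finset β, #C = K → (C ∩ A).Nonempty) :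
    Fintype.card β < #A + K := by
  by_contra! hle
  obtain ⟨C, hC, hCK⟩ := exists_subset_card_eq (s := Aᶜ) (n := K) (by rw [card_compl]; omega)
  obtain ⟨b, hb⟩ := h C hCK
  rw [mem_inter] at hb
  exact mem_compl.mp (hC hb.1) hb.2

lemma Set.mul_le_ncard_of_forall_meets_rows [Fintype α] [Fintype β] {S : Set (α × β)} {K : ℕ}
    (h : ∀ a (C : Finset β), #C = K → ∃ b ∈ C, (a, b) ∈ S) :
    Fintype.card α * (Fintype.card β + 1 - K) ≤ S.ncard := by
  classical
  have hrow (a : α) : Fintype.card β + 1 - K ≤ #{b | (a, b) ∈ S} := by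
    have := card_lt_card_add_of_forall_inter_nonempty (A := {b | (a, b) ∈ S}) fun C hC => by
      obtain ⟨b, hbC, hbS⟩ := h a C hC
      exact ⟨b, Finset.mem_inter.mpr ⟨hbC, Finset.mem_filter.mpr ⟨Finset.mem_univ b, hbS⟩⟩⟩
    omega
  calc Fintype.card α * (Fintype.card β + 1 - K)
      = ∑ _a : α, (Fintype.card β + 1 - K) := by simp
    _ ≤ ∑ a : α, #{b | (a, b) ∈ S} := sum_le_sum fun a _ => hrow a
    _ = #{p : α × β | p ∈ S} := by simp only [card_filter, Fintype.sum_prod_type]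
    _ = S.ncard := by rw [← Set.ncard_coe_finset]; simp

lemma isClique_boxProd_top_singleton_prod (G : SimpleGraph α) (a : α) (C : Set β) :
    (G □ ⊤).IsClique (({a} : Set α) ×ˢ C) := by
  rintro ⟨a₁, b₁⟩ ⟨ha₁, -⟩ ⟨a₂, b₂⟩ ⟨ha₂, -⟩ hne
  simp only [Set.mem_singleton_iff] at ha₁ ha₂
  subst ha₁ ha₂
  exact boxProd_adj.mpr (Or.inr ⟨by simpa using hne, rfl⟩)

lemma touch_top_boxProd_singleton_prod_of_inter_nonempty (H : SimpleGraph β) (a a' : α)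
    {C C' : Set β} (h : (C ∩ C').Nonempty) :
    ((⊤ : SimpleGraph α) □ H).Touch (({a} : Set α) ×ˢ C) (({a'} : Set α) ×ˢ C') := by
  obtain ⟨b, hb, hb'⟩ := h
  refine ⟨(a, b), ⟨rfl, hb⟩, (a', b), ⟨rfl, hb'⟩, ?_⟩
  by_cases h : a = a'
  · exact .inl (h ▸ rfl)
  · exact .inr (boxProd_adj.mpr (Or.inl ⟨h, rfl⟩))

end

open Finset in
theorem treewidth_boxProd_complete_lower_bound_general (m n : ℕ) (hn : Odd n) :
    m * (n + 1) / 2 - 1 ≤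
      treewidth ((⊤ : SimpleGraph (Fin m)) □ (⊤ : SimpleGraph (Fin n))) := by
  obtain ⟨k, rfl⟩ := hn
  have hhalf : m * (2 * k + 1 + 1) / 2 = m * (2 * k + 1 + 1 - (k + 1)) := by
    rw [show 2 * k + 1 + 1 - (k + 1) = k + 1 by omega,
      show m * (2 * k + 1 + 1) = 2 * (m * (k + 1)) by ring, Nat.mul_div_cancel_left _ two_pos]
  refine le_treewidth_of_forall_exists_le_ncard_bag fun d => ?_
  let 𝓑 : Set (Set (Fin m × Fin (2 * k + 1))) :=
    {E | ∃ r, ∃ C : Finset (Fin (2 * k + 1)), #C = k + 1 ∧ E = ({r} : Set (Fin m)) ×ˢ ↑C}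
  obtain ⟨i, hi⟩ := d.exists_bag_meets_of_pairwise_touch (𝓑 := 𝓑) (Set.toFinite _)
    (by rintro _ ⟨r, C, -, rfl⟩; exact isClique_boxProd_top_singleton_prod _ r _)
    (by
      rintro _ ⟨r, C, hC, rfl⟩ _ ⟨r', C', hC', rfl⟩
      have hCC' : (C ∩ C').Nonempty :=
        inter_nonempty_of_card_lt_card_add_card (subset_univ C) (subset_univ C')
          (by rw [card_univ, Fintype.card_fin, hC, hC']; omega)
      exact touch_top_boxProd_singleton_prod_of_inter_nonempty _ r r' (by exact_mod_cast hCC'))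
  have hrows := Set.mul_le_ncard_of_forall_meets_rows (S := d.bag i) (K := k + 1) fun r C hC => by
    obtain ⟨⟨r', c⟩, ⟨hr', hc⟩, hci⟩ := hi _ ⟨r, C, hC, rfl⟩
    exact ⟨c, hc, Set.mem_singleton_iff.mp hr' ▸ hci⟩
  simp only [Fintype.card_fin] at hrows
  exact ⟨i, hhalf ▸ hrows⟩

theorem treewidth_boxProd_complete_lower_bound (m n : ℕ) (hm : 0 < m) (hn : Odd n) :
    m * (n + 1) / 2 - 1 ≤
      treewidth ((⊤ : SimpleGraph (Fin m)) □ (⊤ : SimpleGraph (Fin n))) :=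
  treewidth_boxProd_complete_lower_bound_general m n hn
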